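/- arXiv:2202.06308 — 3 statements merged into one kernel-verified Lean document; each statement's English description precedes it below -/
import Mathlib

section
/- For all r, d ∈ ℕ, the class TM(r,d) is closed under ultraproducts: if (G_i)_{i∈I} is a family of graphs in TM(r,d) and U is an ultrafilter on I, then the ultraproduct ∏_{i∈I} G_i / U belongs to TM(r,d). -/
universe u v w

namespace PF

/-- Syntax of monadic second-order (MSO) formulas over a relational vocabulary `R`
with arities `ar`.  First-order variables and set (monadic second-order) variables
are both indexed by natural numbers. -/
inductive MSO (R : Type u) (ar : R → ℕ) : Type u
  | eq : ℕ → ℕ → MSO R ar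
  | rel : (r : R) → (Fin (ar r) → ℕ) → MSO R ar
  | mem : ℕ → ℕ → MSO R ar
  | not : MSO R ar → MSO R ar
  | and : MSO R ar → MSO R ar → MSO R ar
  | exFO : ℕ → MSO R ar → MSO R ar
  | exSO : ℕ → MSO R ar → MSO R ar

/-- A relational structure over the vocabulary `R` with arities `ar`. -/
structure Struct (R : Type u) (ar : R → ℕ) : Type (max u (v + 1)) where
  carrier : Type v
  interp : (r : R) → (Fin (ar r) → carrier) → Prop

variable {R : Type u} {ar : R → ℕ}

/-- Satisfaction of an MSO formula in a structure, under a (partial) first-order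
assignment `ν` and a set-variable assignment `μ`. -/
def MSO.Sat (A : Struct.{u, v} R ar) :
    MSO R ar → (ℕ → Option A.carrier) → (ℕ → Set A.carrier) → Prop
  | .eq i j, ν, _ => ∃ x : A.carrier, ν i = some x ∧ ν j = some x
  | .rel r f, ν, _ =>
      ∃ g : Fin (ar r) → A.carrier, (∀ k, ν (f k) = some (g k)) ∧ A.interp r g
  | .mem i X, ν, μ => ∃ x : A.carrier, ν i = some x ∧ x ∈ μ X
  | .not φ, ν, μ => ¬ MSO.Sat A φ ν μ
  | .and φ ψ, ν, μ => MSO.Sat A φ ν μ ∧ MSO.Sat A ψ ν μ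
  | .exFO i φ, ν, μ => ∃ x : A.carrier, MSO.Sat A φ (Function.update ν i (some x)) μ
  | .exSO X φ, ν, μ => ∃ s : Set A.carrier, MSO.Sat A φ ν (Function.update μ X s)

/-- Truth of an MSO sentence in a structure. -/
def Struct.Models (A : Struct.{u, v} R ar) (φ : MSO R ar) : Prop :=
  MSO.Sat A φ (fun _ => none) (fun _ => ∅)

/-- Quantifier rank of an MSO formula (both first- and second-order quantifiers count). -/
def MSO.qr : MSO R ar → ℕ
  | .eq _ _ => 0
  | .rel _ _ => 0
  | .mem _ _ => 0
  | .not φ => φ.qr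
  | .and φ ψ => max φ.qr ψ.qr
  | .exFO _ φ => φ.qr + 1
  | .exSO _ φ => φ.qr + 1

/-- The first-order fragment: no set quantifiers and no set atoms. -/
def MSO.IsFO : MSO R ar → Prop
  | .eq _ _ => True
  | .rel _ _ => True
  | .mem _ _ => False
  | .not φ => φ.IsFO
  | .and φ ψ => φ.IsFO ∧ ψ.IsFO
  | .exFO _ φ => φ.IsFO
  | .exSO _ _ => False

/-- Free first-order variables. -/
def MSO.freeFO : MSO R ar → Set ℕ
  | .eq i j => {i, j}
  | .rel _ f => Set.range f
  | .mem i _ => {i}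
  | .not φ => φ.freeFO
  | .and φ ψ => φ.freeFO ∪ ψ.freeFO
  | .exFO i φ => φ.freeFO \ {i}
  | .exSO _ φ => φ.freeFO

/-- Free set variables. -/
def MSO.freeSO : MSO R ar → Set ℕ
  | .eq _ _ => ∅
  | .rel _ _ => ∅
  | .mem _ X => {X}
  | .not φ => φ.freeSO
  | .and φ ψ => φ.freeSO ∪ ψ.freeSO
  | .exFO _ φ => φ.freeSO
  | .exSO X φ => φ.freeSO \ {X}

/-- A sentence is a formula with no free (first- or second-order) variables. -/
def MSO.Closed (φ : MSO R ar) : Prop := φ.freeFO = ∅ ∧ φ.freeSO = ∅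

/-- `MSO[m]`-equivalence: agreement on all MSO sentences of quantifier rank at most `m`. -/
def MSOEquiv (m : ℕ) (A B : Struct.{u, v} R ar) : Prop :=
  ∀ φ : MSO R ar, φ.Closed → φ.qr ≤ m → (A.Models φ ↔ B.Models φ)

/-- `FO[m]`-equivalence: agreement on all FO sentences of quantifier rank at most `m`. -/
def FOEquiv (m : ℕ) (A B : Struct.{u, v} R ar) : Prop :=
  ∀ φ : MSO R ar, φ.IsFO → φ.Closed → φ.qr ≤ m → (A.Models φ ↔ B.Models φ)

/-- The substructure of `A` induced on a subset `s` of its universe. -/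
def Struct.induce (A : Struct.{u, v} R ar) (s : Set A.carrier) : Struct R ar where
  carrier := s
  interp r f := A.interp r fun k => (f k : A.carrier)

/-! ### Graphs as structures over the vocabulary `{E}` -/

abbrev graphAr : Unit → ℕ := fun _ => 2

/-- A simple graph viewed as an `{E}`-structure. -/
def graphStruct {V : Type v} (G : SimpleGraph V) : Struct Unit graphAr where
  carrier := V
  interp _ f := G.Adj (f 0) (f 1)

/-! ### Rooted trees, tree models and shrub-depth classes -/

/-- `w` is a leaf of the rooted tree `(t, rt)`: it has no strictly deeper neighbour
(no children). -/
def IsLeafAt {W : Type v} (t : SimpleGraph W) (rt w : W) : Prop :=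
  ∀ x, t.Adj w x → t.dist rt x ≤ t.dist rt w

/-- `(t, rt, lab, S)` together with the embedding `emb` (whose range is the set of
leaves) is a tree model of `r` labels and height `d` for the graph `G`.
Labels are natural numbers in `[r] = {1, …, r}` for leaves, and `r + 1` for
internal nodes; the signature `S ⊆ [r]² × [d]`. -/
structure IsTreeModel (r d : ℕ) {V : Type v} {W : Type v} (G : SimpleGraph V)
    (t : SimpleGraph W) (rt : W) (lab : W → ℕ) (S : Set (ℕ × ℕ × ℕ))
    (emb : V → W) : Prop where
  isTree : t.IsTree
  heightLe : ∀ w, t.dist rt w ≤ d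
  leafDepth : ∀ w, IsLeafAt t rt w → t.dist rt w = d
  embInj : Function.Injective emb
  leavesEq : Set.range emb = {w | IsLeafAt t rt w}
  leafLab : ∀ u : V, 1 ≤ lab (emb u) ∧ lab (emb u) ≤ r
  internalLab : ∀ w, ¬ IsLeafAt t rt w → lab w = r + 1
  sigSub : ∀ x ∈ S, 1 ≤ x.1 ∧ x.1 ≤ r ∧ 1 ≤ x.2.1 ∧ x.2.1 ≤ r ∧ 1 ≤ x.2.2 ∧ x.2.2 ≤ d
  sigSymm : ∀ i j l : ℕ, (i, j, l) ∈ S ↔ (j, i, l) ∈ S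
  edge : ∀ u u' : V, ∀ l : ℕ, t.dist (emb u) (emb u') = 2 * l →
      (G.Adj u u' ↔ (lab (emb u), lab (emb u'), l) ∈ S)

/-- `G ∈ TM(r, d)`: the (arbitrary-cardinality) graph `G` has a tree model of
`r` labels and height `d`. -/
def InTM (r d : ℕ) {V : Type v} (G : SimpleGraph V) : Prop :=
  ∃ (W : Type v) (t : SimpleGraph W) (rt : W) (lab : W → ℕ)
    (S : Set (ℕ × ℕ × ℕ)) (emb : V → W), IsTreeModel r d G t rt lab S emb

/-- `tower d n`: the `d`-fold iterated exponential of `n`. -/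
def tower : ℕ → ℕ → ℕ
  | 0, n => n
  | d + 1, n => 2 ^ tower d n

/-! ### p-labeled rooted trees -/

/-- Vocabulary of `p`-labeled rooted trees: `E`, `root`, and `P₁, …, P_p`. -/
inductive TreeSym (p : ℕ) : Type
  | edge : TreeSym p
  | isRoot : TreeSym p
  | lab : Fin p → TreeSym p

def treeAr {p : ℕ} : TreeSym p → ℕ
  | .edge => 2
  | .isRoot => 1
  | .lab _ => 1

/-- A `p`-labeled rooted tree of arbitrary cardinality. -/
structure PTree (p : ℕ) : Type (v + 1) where
  V : Type v
  graph : SimpleGraph V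
  isTree : graph.IsTree
  root : V
  label : V → Fin p

/-- A `p`-labeled rooted tree viewed as a structure over `{E, root, P₁, …, P_p}`. -/
def PTree.toStruct {p : ℕ} (t : PTree.{v} p) : Struct (TreeSym p) treeAr where
  carrier := t.V
  interp := fun s => match s with
    | .edge => fun f => t.graph.Adj (f ⟨0, by simp [treeAr]⟩) (f ⟨1, by simp [treeAr]⟩)
    | .isRoot => fun f => f ⟨0, by simp [treeAr]⟩ = t.root
    | .lab i => fun f => t.label (f ⟨0, by simp [treeAr]⟩) = i

/-- The tree has height at most `d`. -/
noncomputable def PTree.heightLe {p : ℕ} (t : PTree.{v} p) (d : ℕ) : Prop :=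
  ∀ x : t.V, t.graph.dist t.root x ≤ d

/-- The height of the tree: the supremum of root-to-node distances. -/
noncomputable def PTree.height {p : ℕ} (t : PTree.{v} p) : ℕ :=
  sSup (Set.range fun x => t.graph.dist t.root x)

/-- A leaf of a `p`-labeled rooted tree. -/
def PTree.IsLeaf {p : ℕ} (t : PTree.{v} p) (x : t.V) : Prop :=
  IsLeafAt t.graph t.root x

/-- The (leaf-hereditary when appropriate) subtree of `t` induced on a subset `s`
of nodes containing the root, provided the induced graph is again a tree. -/
def PTree.induce {p : ℕ} (t : PTree.{v} p) (s : Set t.V) (hr : t.root ∈ s)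
    (hT : (t.graph.induce s).IsTree) : PTree p where
  V := s
  graph := t.graph.induce s
  isTree := hT
  root := ⟨t.root, hr⟩
  label := fun x => t.label x

/-! ### Ultraproducts of graphs -/

/-- The `U`-almost-everywhere-equality setoid on a product of types. -/
def UltraSetoid {I : Type w} (U : Ultrafilter I) (V : I → Type v) :
    Setoid (∀ i, V i) where
  r a b := {i | a i = b i} ∈ U
  iseqv := by
    refine ⟨fun a => ?_, @fun a b h => ?_, @fun a b c h1 h2 => ?_⟩
    · have : {i | a i = a i} = Set.univ := by ext i; simp
      rw [this]
      exact Filter.univ_mem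
    · exact Filter.mem_of_superset h fun i hi => (hi : a i = b i).symm
    · exact Filter.mem_of_superset (Filter.inter_mem h1 h2) fun i hi =>
        (hi.1 : a i = b i).trans hi.2

/-- The ultraproduct of a family of types with respect to an ultrafilter. -/
def UltraProd {I : Type w} (U : Ultrafilter I) (V : I → Type v) : Type (max w v) :=
  Quotient (UltraSetoid U V)

/-- The ultraproduct of a family of simple graphs with respect to an ultrafilter. -/
def UltraProdGraph {I : Type w} (U : Ultrafilter I) {V : I → Type v}
    (G : ∀ i, SimpleGraph (V i)) : SimpleGraph (UltraProd U V) where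
  Adj x y :=
    Quotient.liftOn₂ x y (fun a b => {i | (G i).Adj (a i) (b i)} ∈ U)
      (by
        intro a b a' b' ha hb
        refine propext ⟨fun h => ?_, fun h => ?_⟩
        · refine Filter.mem_of_superset
            (Filter.inter_mem (Filter.inter_mem ha hb) h) fun i hi => ?_
          have h1 : a i = a' i := hi.1.1
          have h2 : b i = b' i := hi.1.2
          have h3 : (G i).Adj (a i) (b i) := hi.2
          show (G i).Adj (a' i) (b' i)
          rwa [h1, h2] at h3
        · have ha' : {i | a' i = a i} ∈ U :=
            Filter.mem_of_superset ha fun i hi => (hi : a i = a' i).symm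
          have hb' : {i | b' i = b i} ∈ U :=
            Filter.mem_of_superset hb fun i hi => (hi : b i = b' i).symm
          refine Filter.mem_of_superset
            (Filter.inter_mem (Filter.inter_mem ha' hb') h) fun i hi => ?_
          have h1 : a' i = a i := hi.1.1
          have h2 : b' i = b i := hi.1.2
          have h3 : (G i).Adj (a' i) (b' i) := hi.2
          show (G i).Adj (a i) (b i)
          rwa [h1, h2] at h3)
  symm := by
    refine ⟨fun x y => Quotient.inductionOn₂ x y fun a b h => ?_⟩
    exact Filter.mem_of_superset h fun i hi => (G i).adj_symm hi
  loopless := by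
    refine ⟨fun x => Quotient.inductionOn x fun a h => ?_⟩
    have h' : {i | (G i).Adj (a i) (a i)} ∈ U := h
    have he : {i | (G i).Adj (a i) (a i)} = (∅ : Set I) := by
      ext i
      simp
    rw [he] at h'
    exact Filter.empty_notMem (U : Filter I) h'

/-!
Take the tree models coordinatewise: the ultraproduct of the trees, rooted at the class of the
roots, with labels and signature read off `U`-almost everywhere. All distances in the factors are
bounded by `2 * d`, so a bounded distance is `U`-almost everywhere constant and, by Łoś for walks
of a fixed length, equals the distance in the ultraproduct; depths, leaves and the edge rule
therefore transfer. Acyclicity transfers because a cycle is a finite subgraph, and a copy of a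
finite graph in the ultraproduct yields copies in almost all factors.
-/

section Ultralimit

variable {I : Type w} (U : Ultrafilter I)

lemma exists_eventually_eq_of_eventually_le {f : I → ℕ} {n : ℕ} (h : ∀ᶠ i in U, f i ≤ n) :
    ∃ k, ∀ᶠ i in U, f i = k := by
  obtain ⟨k, -, hk⟩ := (U.eventually_exists_mem_iff (P := fun k i => f i = k)
    (Set.finite_Iic n)).1 (h.mono fun i hi => ⟨f i, hi, rfl⟩)
  exact ⟨k, hk⟩

/-- Junk unless `f` is `U`-eventually bounded. -/
noncomputable def ultraLim (f : I → ℕ) : ℕ :=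
  Classical.epsilon fun k => ∀ᶠ i in U, f i = k

variable {U}

lemma eventually_eq_ultraLim {f : I → ℕ} {n : ℕ} (h : ∀ᶠ i in U, f i ≤ n) :
    ∀ᶠ i in U, f i = ultraLim U f :=
  Classical.epsilon_spec (exists_eventually_eq_of_eventually_le U h)

lemma ultraLim_eq {f : I → ℕ} {k : ℕ} (h : ∀ᶠ i in U, f i = k) : ultraLim U f = k := by
  obtain ⟨i, hi, hik⟩ := ((eventually_eq_ultraLim (h.mono fun i hi => hi.le)).and h).exists
  exact hi.symm.trans hik

lemma ultraLim_congr {f g : I → ℕ} (h : f =ᶠ[U] g) : ultraLim U f = ultraLim U g := by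
  unfold ultraLim
  congr 1
  ext k
  exact Filter.eventually_congr (h.mono fun i hi => by rw [hi])

end Ultralimit

lemma _root_.SimpleGraph.Walk.exists_length_eq_add_one_iff {α : Type*} {H : SimpleGraph α}
    {x y : α} {n : ℕ} : (∃ p : H.Walk x y, p.length = n + 1) ↔
      ∃ z, H.Adj x z ∧ ∃ q : H.Walk z y, q.length = n := by
  constructor
  · rintro ⟨p, hp⟩
    cases p with
    | nil => simp at hp
    | cons h q => exact ⟨_, h, q, by simpa using hp⟩
  · rintro ⟨z, h, q, hq⟩
    exact ⟨.cons h q, by simp [hq]⟩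

namespace UltraProd

variable {I : Type w} (U : Ultrafilter I) {V W : I → Type v}

def mk (a : ∀ i, V i) : UltraProd U V := Quotient.mk (UltraSetoid U V) a

variable {U}

lemma mk_surjective : Function.Surjective (mk U : (∀ i, V i) → UltraProd U V) :=
  Quotient.mk_surjective

lemma mk_eq_mk {a b : ∀ i, V i} : mk U a = mk U b ↔ ∀ᶠ i in U, a i = b i :=
  Quotient.eq

variable (U) in
def map (f : ∀ i, V i → W i) : UltraProd U V → UltraProd U W :=
  Quotient.map (fun a i => f i (a i)) fun a b (h : ∀ᶠ i in U, a i = b i) =>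
    h.mono fun i hi => congrArg (f i) hi

@[simp]
lemma map_mk (f : ∀ i, V i → W i) (a : ∀ i, V i) : map U f (mk U a) = mk U fun i => f i (a i) :=
  rfl

lemma map_injective {f : ∀ i, V i → W i} (hf : ∀ i, Function.Injective (f i)) :
    Function.Injective (map U f) := by
  intro x y hxy
  obtain ⟨a, rfl⟩ := mk_surjective x
  obtain ⟨b, rfl⟩ := mk_surjective y
  rw [map_mk, map_mk, mk_eq_mk] at hxy
  exact mk_eq_mk.2 (hxy.mono fun i hi => hf i hi)

variable (U) in
noncomputable def natLim (f : ∀ i, V i → ℕ) : UltraProd U V → ℕ :=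
  Quotient.lift (fun a => ultraLim U fun i => f i (a i)) fun a b (h : ∀ᶠ i in U, a i = b i) =>
    ultraLim_congr (h.mono fun i hi => congrArg (f i) hi)

lemma natLim_mk_of_eventually {f : ∀ i, V i → ℕ} {a : ∀ i, V i} {k : ℕ}
    (h : ∀ᶠ i in U, f i (a i) = k) : natLim U f (mk U a) = k :=
  ultraLim_eq h

lemma eventually_eq_natLim_mk {f : ∀ i, V i → ℕ} {n : ℕ} (hf : ∀ i x, f i x ≤ n)
    (a : ∀ i, V i) : ∀ᶠ i in U, f i (a i) = natLim U f (mk U a) :=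
  eventually_eq_ultraLim (.of_forall fun i => hf i (a i))

end UltraProd

namespace UltraProdGraph

open UltraProd SimpleGraph

variable {I : Type w} {U : Ultrafilter I} {V : I → Type v} {G : ∀ i, SimpleGraph (V i)}

lemma adj_mk {a b : ∀ i, V i} :
    (UltraProdGraph U G).Adj (mk U a) (mk U b) ↔ ∀ᶠ i in U, (G i).Adj (a i) (b i) :=
  Iff.rfl

lemma exists_walk_length_mk_iff (a b : ∀ i, V i) (n : ℕ) :
    (∃ p : (UltraProdGraph U G).Walk (mk U a) (mk U b), p.length = n) ↔
      ∀ᶠ i in U, ∃ p : (G i).Walk (a i) (b i), p.length = n := by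
  induction n generalizing a with
  | zero =>
    simp only [Walk.exists_length_eq_zero_iff, mk_eq_mk]
  | succ n ih =>
    have : ∀ i, Nonempty (V i) := fun i => ⟨a i⟩
    simp only [Walk.exists_length_eq_add_one_iff]
    constructor
    · rintro ⟨z, hz, hq⟩
      obtain ⟨c, rfl⟩ := mk_surjective z
      exact ((adj_mk.1 hz).and ((ih c).1 hq)).mono fun i hi => ⟨c i, hi⟩
    · intro h
      obtain ⟨c, hc⟩ := Filter.skolem.1 h
      exact ⟨mk U c, adj_mk.2 (hc.mono fun i hi => hi.1), (ih c).2 (hc.mono fun i hi => hi.2)⟩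

lemma dist_mk_of_eventually (hG : ∀ i, (G i).Connected) {a b : ∀ i, V i} {k : ℕ}
    (h : ∀ᶠ i in U, (G i).dist (a i) (b i) = k) :
    (UltraProdGraph U G).dist (mk U a) (mk U b) = k := by
  obtain ⟨p, hp⟩ := (exists_walk_length_mk_iff a b k).2
    (h.mono fun i hi => hi ▸ (hG i).exists_walk_length_eq_dist (a i) (b i))
  obtain ⟨q, hq⟩ := (Walk.reachable p).exists_walk_length_eq_dist
  obtain ⟨i, hi, q', hq'⟩ := (h.and ((exists_walk_length_mk_iff a b _).1 ⟨q, hq⟩)).exists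
  refine le_antisymm (hp ▸ dist_le p) ?_
  rw [← hi, ← hq']
  exact dist_le q'

lemma eventually_dist_eq_dist_mk (hG : ∀ i, (G i).Connected) {n : ℕ} {a b : ∀ i, V i}
    (hn : ∀ i, (G i).dist (a i) (b i) ≤ n) :
    ∀ᶠ i in U, (G i).dist (a i) (b i) = (UltraProdGraph U G).dist (mk U a) (mk U b) := by
  obtain ⟨k, hk⟩ := exists_eventually_eq_of_eventually_le U (.of_forall hn)
  rw [dist_mk_of_eventually hG hk]
  exact hk

lemma connected (hG : ∀ i, (G i).Connected) {n : ℕ} (hn : ∀ i (x y : V i), (G i).dist x y ≤ n) :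
    (UltraProdGraph U G).Connected := by
  have : Nonempty (UltraProd U V) := ⟨mk U fun i => (hG i).nonempty.some⟩
  refine ⟨fun x y => ?_⟩
  obtain ⟨a, rfl⟩ := mk_surjective x
  obtain ⟨b, rfl⟩ := mk_surjective y
  obtain ⟨p, -⟩ := (exists_walk_length_mk_iff a b _).2
    ((eventually_dist_eq_dist_mk hG fun i => hn i (a i) (b i)).mono fun i hi =>
      hi ▸ (hG i).exists_walk_length_eq_dist (a i) (b i))
  exact p.reachable

lemma eventually_isContained {β : Type*} [Finite β] {H : SimpleGraph β}
    (h : H ⊑ UltraProdGraph U G) : ∀ᶠ i in U, H ⊑ G i := by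
  obtain ⟨f⟩ := h
  choose a ha using fun x => mk_surjective (f x)
  have hadj : ∀ᶠ i in U, ∀ x y, H.Adj x y → (G i).Adj (a x i) (a y i) := by
    refine Filter.eventually_all.2 fun x => Filter.eventually_all.2 fun y =>
      Filter.eventually_imp_distrib_left.2 fun hxy => adj_mk.1 ?_
    rw [ha, ha]
    exact f.toHom.map_adj hxy
  have hne : ∀ᶠ i in U, ∀ x y, x ≠ y → a x i ≠ a y i := by
    refine Filter.eventually_all.2 fun x => Filter.eventually_all.2 fun y =>
      Filter.eventually_imp_distrib_left.2 fun hxy => Ultrafilter.eventually_not.2 fun heq => ?_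
    exact hxy (f.injective (by simp only [Copy.toHom_apply, ← ha, mk_eq_mk.2 heq]))
  filter_upwards [hadj, hne] with i hadj hne
  exact ⟨⟨⟨fun x => a x i, hadj _ _⟩, fun x y hxy => by_contra fun h => hne x y h hxy⟩⟩

lemma isAcyclic (hG : ∀ᶠ i in U, (G i).IsAcyclic) : (UltraProdGraph U G).IsAcyclic := by
  refine isAcyclic_iff_free_cycleGraph.2 fun n hn hcycle => ?_
  obtain ⟨i, hi, hcycle_i⟩ := (hG.and (eventually_isContained hcycle)).exists
  exact isAcyclic_iff_free_cycleGraph.1 hi n hn hcycle_i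

end UltraProdGraph

namespace IsTreeModel

variable {r d : ℕ} {V W : Type v} {G : SimpleGraph V} {t : SimpleGraph W} {rt : W}
  {lab : W → ℕ} {S : Set (ℕ × ℕ × ℕ)} {emb : V → W}

lemma isLeafAt_iff (M : IsTreeModel r d G t rt lab S emb) {w : W} :
    IsLeafAt t rt w ↔ t.dist rt w = d :=
  ⟨M.leafDepth w, fun h x _ => (M.heightLe x).trans_eq h.symm⟩

lemma isLeafAt_emb (M : IsTreeModel r d G t rt lab S emb) (v : V) : IsLeafAt t rt (emb v) :=
  M.leavesEq.subset (Set.mem_range_self v)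

lemma exists_emb_eq (M : IsTreeModel r d G t rt lab S emb) {w : W} (hw : IsLeafAt t rt w) :
    ∃ v, emb v = w :=
  M.leavesEq.symm.subset hw

lemma dist_le (M : IsTreeModel r d G t rt lab S emb) (x y : W) : t.dist x y ≤ 2 * d :=
  calc t.dist x y ≤ t.dist x rt + t.dist rt y := M.isTree.connected.dist_triangle
    _ = t.dist rt x + t.dist rt y := by rw [SimpleGraph.dist_comm]
    _ ≤ 2 * d := by linarith [M.heightLe x, M.heightLe y]

lemma lab_le (M : IsTreeModel r d G t rt lab S emb) (w : W) : lab w ≤ r + 1 := by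
  by_cases hw : IsLeafAt t rt w
  · obtain ⟨v, rfl⟩ := M.exists_emb_eq hw
    exact (M.leafLab v).2.trans r.le_succ
  · exact (M.internalLab w hw).le

/-- A node of maximal depth is a leaf, hence a vertex. -/
lemma nonempty (M : IsTreeModel r d G t rt lab S emb) : Nonempty V := by
  have hbdd : BddAbove (Set.range fun x => t.dist rt x) := ⟨d, Set.forall_mem_range.2 M.heightLe⟩
  obtain ⟨w, hw⟩ := Nat.sSup_mem (Set.range_nonempty_iff_nonempty.2 ⟨rt⟩) hbdd
  obtain ⟨v, -⟩ := M.exists_emb_eq fun x _ => hw ▸ le_csSup hbdd ⟨x, rfl⟩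
  exact ⟨v⟩

end IsTreeModel

section UltraProdTreeModel

open UltraProd UltraProdGraph

variable {r d : ℕ} {I : Type w} {U : Ultrafilter I} {V W : I → Type v}
  {G : ∀ i, SimpleGraph (V i)} {t : ∀ i, SimpleGraph (W i)} {rt : ∀ i, W i}
  {lab : ∀ i, W i → ℕ} {S : I → Set (ℕ × ℕ × ℕ)} {emb : ∀ i, V i → W i}

variable (U) in
lemma IsTreeModel.ultraProd_eventually_dist_eq
    (M : ∀ i, IsTreeModel r d (G i) (t i) (rt i) (lab i) (S i) (emb i)) (a b : ∀ i, W i) :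
    ∀ᶠ i in U, (t i).dist (a i) (b i) =
      (UltraProdGraph U t).dist (UltraProd.mk U a) (UltraProd.mk U b) :=
  eventually_dist_eq_dist_mk (fun i => (M i).isTree.connected) fun i => (M i).dist_le _ _

lemma IsTreeModel.ultraProd_dist_root_le
    (M : ∀ i, IsTreeModel r d (G i) (t i) (rt i) (lab i) (S i) (emb i)) (w : UltraProd U W) :
    (UltraProdGraph U t).dist (UltraProd.mk U rt) w ≤ d := by
  obtain ⟨a, rfl⟩ := mk_surjective w
  obtain ⟨i, hi⟩ := (ultraProd_eventually_dist_eq U M rt a).exists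
  exact hi ▸ (M i).heightLe (a i)

lemma IsTreeModel.ultraProd_isLeafAt_iff
    (M : ∀ i, IsTreeModel r d (G i) (t i) (rt i) (lab i) (S i) (emb i)) (w : UltraProd U W) :
    IsLeafAt (UltraProdGraph U t) (UltraProd.mk U rt) w ↔
      (UltraProdGraph U t).dist (UltraProd.mk U rt) w = d := by
  refine ⟨fun hleaf => by_contra fun hne => ?_, fun h x _ => h ▸ ultraProd_dist_root_le M x⟩
  obtain ⟨a, rfl⟩ := mk_surjective w
  have : ∀ i, Nonempty (W i) := fun i => ⟨rt i⟩
  have hdist := ultraProd_eventually_dist_eq U M rt a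
  obtain ⟨c, hc⟩ := Filter.skolem.1 <| hdist.mono fun i hi => by
    have hnleaf : ¬ IsLeafAt (t i) (rt i) (a i) := fun h => hne (hi ▸ (M i).leafDepth _ h)
    simpa only [IsLeafAt, not_forall, not_le, exists_prop] using hnleaf
  have hle := hleaf _ (adj_mk.2 (hc.mono fun i hi => hi.1))
  obtain ⟨i, hia, hic, -, hlt⟩ :=
    (hdist.and ((ultraProd_eventually_dist_eq U M rt c).and hc)).exists
  omega

lemma IsTreeModel.ultraProd_range_map_emb
    (M : ∀ i, IsTreeModel r d (G i) (t i) (rt i) (lab i) (S i) (emb i)) :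
    Set.range (map U emb) = {w | IsLeafAt (UltraProdGraph U t) (UltraProd.mk U rt) w} := by
  ext w
  obtain ⟨a, rfl⟩ := mk_surjective w
  rw [Set.mem_ofPred_eq, ultraProd_isLeafAt_iff M]
  constructor
  · rintro ⟨v, hv⟩
    obtain ⟨b, rfl⟩ := mk_surjective v
    rw [← hv, map_mk]
    exact dist_mk_of_eventually (fun i => (M i).isTree.connected)
      (.of_forall fun i => (M i).leafDepth _ ((M i).isLeafAt_emb (b i)))
  · intro hd
    have : ∀ i, Nonempty (V i) := fun i => (M i).nonempty
    obtain ⟨b, hb⟩ := Filter.skolem.1 <| (ultraProd_eventually_dist_eq U M rt a).mono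
      fun i hi => (M i).exists_emb_eq ((M i).isLeafAt_iff.2 (hi.trans hd))
    exact ⟨UltraProd.mk U b, mk_eq_mk.2 hb⟩

theorem IsTreeModel.ultraProd
    (M : ∀ i, IsTreeModel r d (G i) (t i) (rt i) (lab i) (S i) (emb i)) :
    IsTreeModel r d (UltraProdGraph U G) (UltraProdGraph U t) (UltraProd.mk U rt)
      (natLim U lab) {x | ∀ᶠ i in U, x ∈ S i} (map U emb) where
  isTree := ⟨connected (fun i => (M i).isTree.connected) fun i => (M i).dist_le,
    isAcyclic (.of_forall fun i => (M i).isTree.isAcyclic)⟩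
  heightLe := ultraProd_dist_root_le M
  leafDepth w := (ultraProd_isLeafAt_iff M w).1
  embInj := map_injective fun i => (M i).embInj
  leavesEq := ultraProd_range_map_emb M
  leafLab v := by
    obtain ⟨b, rfl⟩ := mk_surjective v
    obtain ⟨i, hi⟩ :=
      (eventually_eq_natLim_mk (fun i => (M i).lab_le) fun i => emb i (b i)).exists
    rw [map_mk, ← hi]
    exact (M i).leafLab (b i)
  internalLab w hw := by
    obtain ⟨a, rfl⟩ := mk_surjective w
    rw [ultraProd_isLeafAt_iff M] at hw
    refine natLim_mk_of_eventually ((ultraProd_eventually_dist_eq U M rt a).mono fun i hi => ?_)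
    exact (M i).internalLab _ fun hleaf => hw (hi ▸ (M i).leafDepth _ hleaf)
  sigSub x hx := by
    obtain ⟨i, hi⟩ := hx.exists
    exact (M i).sigSub x hi
  sigSymm i j l := Filter.eventually_congr (.of_forall fun k => (M k).sigSymm i j l)
  edge u u' l hdist := by
    obtain ⟨a, rfl⟩ := mk_surjective u
    obtain ⟨b, rfl⟩ := mk_surjective u'
    rw [map_mk, map_mk] at hdist ⊢
    rw [adj_mk, Set.mem_ofPred_eq]
    refine Filter.eventually_congr ?_
    filter_upwards
      [ultraProd_eventually_dist_eq U M (fun i => emb i (a i)) (fun i => emb i (b i)),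
      eventually_eq_natLim_mk (fun i => (M i).lab_le) fun i => emb i (a i),
      eventually_eq_natLim_mk (fun i => (M i).lab_le) fun i => emb i (b i)] with i hd ha hb
    rw [← ha, ← hb]
    exact (M i).edge _ _ l (hd.trans hdist)

end UltraProdTreeModel

/-- `TM(r,d)` is closed under ultraproducts. -/
theorem ultraproduct_closed_TM (r d : ℕ) {I : Type} (U : Ultrafilter I)
    {V : I → Type} (G : ∀ i, SimpleGraph (V i)) (hG : ∀ i, InTM r d (G i)) :
    InTM r d (UltraProdGraph U G) := by
  choose W t rt lab S emb M using hG
  exact ⟨_, _, _, _, _, _, IsTreeModel.ultraProd M⟩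

end PF
end

section
/- For all r, d ∈ ℕ, the class TM(r,d) is closed under ultraroots: if H is an arbitrary graph and some ultrapower of H (with respect to an ultrafilter U on an index set I) belongs to TM(r,d), then H belongs to TM(r,d). -/
universe u v w

/-!
The diagonal map embeds `H` into its ultrapower as an induced subgraph, so it suffices that
`TM(r, d)` is closed under nonempty induced subgraphs (and `H` is nonempty because its ultrapower,
having a tree model, has a leaf). Given a tree model of `G` and an induced copy of `H`, prune the
tree to the ancestors of the leaves representing `H`. In a tree these ancestors span a subtree in
which distances are unchanged and whose leaves are exactly the retained ones, so the labels and the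
signature of the original model still define `H`.
-/

namespace SimpleGraph

variable {V V' : Type*} {G : SimpleGraph V} {G' : SimpleGraph V'}

theorem Walk.dist_add_dist_of_mem_support {u v x : V} {p : G.Walk u v}
    (hp : p.length = G.dist u v) (hx : x ∈ p.support) :
    G.dist u x + G.dist x v = G.dist u v := by
  classical
  have hsplit := congrArg Walk.length (p.take_spec hx)
  rw [Walk.length_append] at hsplit
  have h₁ := dist_le (p.takeUntil x hx)
  have h₂ := dist_le (p.dropUntil x hx)
  have htri := (p.takeUntil x hx).reachable.dist_triangle_left v
  omega

theorem IsAcyclic.dist_map_embedding (hG' : G'.IsAcyclic) (f : G ↪g G') {u v : V}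
    (huv : G.Reachable u v) : G'.dist (f u) (f v) = G.dist u v := by
  obtain ⟨p, hp, hpl⟩ := huv.exists_path_of_dist
  have hfp : (p.map f.toHom).IsPath := hp.map f.injective
  obtain ⟨q, hq, hql⟩ := (huv.map f.toHom).exists_path_of_dist
  have hqp : q = p.map f.toHom :=
    congrArg Subtype.val ((hG'.subsingleton_path _ _).elim ⟨q, hq⟩ ⟨_, hfp⟩)
  simpa [hqp, hpl] using hql.symm

end SimpleGraph

namespace PF

open SimpleGraph

section Ancestors

variable {W : Type v} {t : SimpleGraph W} {rt : W} {L : Set W}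

def ancestors (t : SimpleGraph W) (rt : W) (L : Set W) : Set W :=
  {w | ∃ l ∈ L, t.dist rt w + t.dist w l = t.dist rt l}

lemma subset_ancestors : L ⊆ ancestors t rt L := fun l hl => ⟨l, hl, by simp⟩

lemma root_mem_ancestors (hL : L.Nonempty) : rt ∈ ancestors t rt L :=
  let ⟨l, hl⟩ := hL
  ⟨l, hl, by simp⟩

lemma mem_ancestors_of_dist_add_dist (ht : t.Connected) {w x : W} (hw : w ∈ ancestors t rt L)
    (hx : t.dist rt x + t.dist x w = t.dist rt w) : x ∈ ancestors t rt L := by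
  obtain ⟨l, hl, hwl⟩ := hw
  refine ⟨l, hl, ?_⟩
  have := ht.dist_triangle (u := rt) (v := x) (w := l)
  have := ht.dist_triangle (u := x) (v := w) (w := l)
  omega

lemma connected_induce_ancestors (ht : t.Connected) (hL : L.Nonempty) :
    (t.induce (ancestors t rt L)).Connected := by
  refine (connected_iff_exists_forall_reachable _).2 ⟨⟨rt, root_mem_ancestors hL⟩, ?_⟩
  rintro ⟨w, hw⟩
  obtain ⟨p, hpl⟩ := ht.exists_walk_length_eq_dist rt w
  exact ⟨p.induce _ fun x hx =>
    mem_ancestors_of_dist_add_dist ht hw (p.dist_add_dist_of_mem_support hpl hx)⟩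

lemma isTree_induce_ancestors (ht : t.IsTree) (hL : L.Nonempty) :
    (t.induce (ancestors t rt L)).IsTree :=
  ⟨connected_induce_ancestors ht.connected hL, ht.isAcyclic.induce _⟩

lemma dist_induce_ancestors (ht : t.IsTree) (hL : L.Nonempty) (a b : ancestors t rt L) :
    (t.induce (ancestors t rt L)).dist a b = t.dist a b :=
  (ht.isAcyclic.dist_map_embedding (Embedding.induce _)
    ((connected_induce_ancestors ht.connected hL).preconnected a b)).symm

lemma isLeafAt_induce_ancestors_iff (ht : t.IsTree) (hL : L.Nonempty)
    (hleaf : ∀ l ∈ L, IsLeafAt t rt l) (w : ancestors t rt L) :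
    IsLeafAt (t.induce (ancestors t rt L)) ⟨rt, root_mem_ancestors hL⟩ w ↔ (w : W) ∈ L := by
  obtain ⟨w, hwK⟩ := w
  simp only [IsLeafAt, dist_induce_ancestors ht hL, Subtype.forall, comap_adj,
    Function.Embedding.subtype_apply]
  constructor
  · obtain ⟨l, hl, hwl⟩ := hwK
    intro hw
    by_contra hwL
    -- the next vertex on the geodesic from `w` down to `l` is a deeper neighbour inside the set
    obtain ⟨p, hpl⟩ := ht.connected.exists_walk_length_eq_dist w l
    have hnil : ¬ p.Nil := fun h => hwL (h.eq ▸ hl)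
    have hadj : t.Adj w p.snd := p.adj_snd hnil
    have hx : t.dist w p.snd + t.dist p.snd l = t.dist w l :=
      p.dist_add_dist_of_mem_support hpl (p.getVert_mem_support 1)
    have hwx : t.dist w p.snd = 1 := dist_eq_one_iff_adj.2 hadj
    have := ht.connected.dist_triangle (u := rt) (v := p.snd) (w := l)
    have := ht.connected.dist_triangle (u := rt) (v := w) (w := p.snd)
    have := hw p.snd ⟨l, hl, by omega⟩ hadj
    omega
  · exact fun hwL x _ hadj => hleaf w hwL x hadj

end Ancestors

lemma exists_isLeafAt {W : Type v} {t : SimpleGraph W} {rt : W} {d : ℕ}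
    (hle : ∀ x, t.dist rt x ≤ d) : ∃ x, IsLeafAt t rt x := by
  have hne : (Set.range (t.dist rt)).Nonempty := ⟨_, rt, rfl⟩
  have hbdd : BddAbove (Set.range (t.dist rt)) := ⟨d, by rintro _ ⟨x, rfl⟩; exact hle x⟩
  obtain ⟨x, hx⟩ := Nat.sSup_mem hne hbdd
  exact ⟨x, fun y _ => hx ▸ le_csSup hbdd ⟨y, rfl⟩⟩

section TreeModel

variable {r d : ℕ} {V V' : Type v} {G : SimpleGraph V} {H : SimpleGraph V'}

theorem InTM.nonempty (h : InTM r d G) : Nonempty V := by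
  obtain ⟨W, t, rt, lab, S, emb, M⟩ := h
  obtain ⟨w, hw⟩ := exists_isLeafAt M.heightLe
  obtain ⟨v, -⟩ : w ∈ Set.range emb := M.leavesEq ▸ hw
  exact ⟨v⟩

theorem InTM.of_embedding [Nonempty V'] (f : H ↪g G) (h : InTM r d G) : InTM r d H := by
  obtain ⟨W, t, rt, lab, S, emb, M⟩ := h
  set L := Set.range (emb ∘ f)
  have hL : L.Nonempty := Set.range_nonempty _
  have hleaf : ∀ l ∈ L, IsLeafAt t rt l := by
    rintro _ ⟨u, rfl⟩
    exact M.leavesEq.subset ⟨f u, rfl⟩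
  have hdist := dist_induce_ancestors (rt := rt) M.isTree hL
  have hleafK := isLeafAt_induce_ancestors_iff M.isTree hL hleaf
  refine ⟨ancestors t rt L, t.induce (ancestors t rt L), ⟨rt, root_mem_ancestors hL⟩,
    fun w => lab w, S, fun u => ⟨emb (f u), subset_ancestors ⟨u, rfl⟩⟩,
    { isTree := isTree_induce_ancestors M.isTree hL
      heightLe := fun w => (hdist _ _).trans_le (M.heightLe w)
      leafDepth := fun w hw => ?_
      embInj := fun a b hab => f.injective (M.embInj (congrArg Subtype.val hab))
      leavesEq := ?_
      leafLab := fun u => M.leafLab (f u)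
      internalLab := fun w hw => ?_
      sigSub := M.sigSub
      sigSymm := M.sigSymm
      edge := fun u u' l hl => ?_ }⟩
  · rw [hdist]
    exact M.leafDepth w (hleaf w ((hleafK w).1 hw))
  · ext w
    rw [Set.mem_ofPred_eq, hleafK]
    simp [L, Subtype.ext_iff, eq_comm]
  · refine M.internalLab w fun hwt => hw ((hleafK w).2 ?_)
    -- a leaf of `t` has depth `d`, as has the leaf below it in `L`, so it is that leaf
    obtain ⟨l, hl, hwl⟩ := w.2
    have := M.leafDepth w hwt
    have := M.leafDepth l (hleaf l hl)
    rwa [M.isTree.connected.dist_eq_zero_iff.1 (by omega : t.dist w l = 0)]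
  · rw [hdist] at hl
    rw [← f.map_adj_iff]
    exact M.edge (f u) (f u') l hl

end TreeModel

def UltraProdGraph.diagEmbedding {I : Type w} (U : Ultrafilter I) {V : Type v}
    (H : SimpleGraph V) : H ↪g UltraProdGraph U (fun _ : I => H) where
  toFun a := Quotient.mk _ fun _ => a
  inj' _ _ hab := Filter.eventually_const.1 (Quotient.exact hab)
  map_rel_iff' := Filter.eventually_const

/-- `TM(r,d)` is closed under ultraroots: if some ultrapower of a graph `H`
belongs to `TM(r,d)`, then so does `H`. -/
theorem ultraroot_closed_TM (r d : ℕ) {W : Type} (H : SimpleGraph W)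
    {I : Type} (U : Ultrafilter I)
    (h : InTM r d (UltraProdGraph U (fun _ : I => H))) :
    InTM r d H := by
  have : Nonempty W := by
    obtain ⟨⟨a⟩⟩ := h.nonempty
    exact ⟨a (U.nonempty_of_mem Filter.univ_mem).some⟩
  exact h.of_embedding (UltraProdGraph.diagEmbedding U H)

end PF
end

section
/- For all r, d ∈ ℕ, a finite graph is FO-pseudo-finite relative to TM_fin(r,d) (equivalently, MSO-pseudo-finite relative to TM_fin(r,d)) if and only if it belongs to TM_fin(r,d); in other words, no finite graph outside TM_fin(r,d) satisfies Th_FO(TM_fin(r,d)). -/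
universe u v w

namespace PF

variable {R : Type u} {ar : R → ℕ}

/-!
A finite graph `G` on `n` vertices is pinned down up to isomorphism by the first-order sentence
`∃ x₀ … x_{n-1}`, saying that the `xᵢ` exhaust the universe and realise the atomic diagram of `G`.
Having a tree model is invariant under isomorphism, so if `G ∉ TM_fin(r,d)` the negation of this
sentence holds in every finite graph with a tree model, hence in `G` itself, which is absurd.
Conversely `G` is itself one of the finite graphs over which the theory is taken.
-/

namespace MSO

def top : MSO R ar := .not (.exFO 0 (.not (.eq 0 0)))

def conj (L : List (MSO R ar)) : MSO R ar := L.foldr .and top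

def literal (p : Prop) [Decidable p] (φ : MSO R ar) : MSO R ar :=
  if p then φ else .not φ

/-- `∃ x₀ … x_{k-1}, φ`. -/
def exFOBlock : ℕ → MSO R ar → MSO R ar
  | 0, φ => φ
  | k + 1, φ => exFOBlock k (.exFO k φ)

def finAssign {α : Type v} {k : ℕ} (f : Fin k → α) (ν : ℕ → Option α) : ℕ → Option α :=
  fun m => if h : m < k then some (f ⟨m, h⟩) else ν m

lemma isFO_conj {L : List (MSO R ar)} (h : ∀ φ ∈ L, φ.IsFO) : (conj L).IsFO := by
  induction L with
  | nil => exact trivial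
  | cons φ L ih => exact ⟨h φ (by simp), ih fun ψ hψ => h ψ (by simp [hψ])⟩

lemma isFO_literal (p : Prop) [Decidable p] {φ : MSO R ar} (h : φ.IsFO) :
    (literal p φ).IsFO := by
  unfold literal
  split_ifs
  exacts [h, h]

lemma isFO_exFOBlock (k : ℕ) {φ : MSO R ar} (h : φ.IsFO) : (exFOBlock k φ).IsFO := by
  induction k generalizing φ with
  | zero => exact h
  | succ k ih => exact ih h

lemma freeFO_conj_subset {L : List (MSO R ar)} {s : Set ℕ} (h : ∀ φ ∈ L, φ.freeFO ⊆ s) :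
    (conj L).freeFO ⊆ s := by
  induction L with
  | nil => simp [conj, top, freeFO]
  | cons φ L ih =>
    exact Set.union_subset (h φ (by simp)) (ih fun ψ hψ => h ψ (by simp [hψ]))

lemma freeFO_literal (p : Prop) [Decidable p] (φ : MSO R ar) :
    (literal p φ).freeFO = φ.freeFO := by
  unfold literal
  split_ifs <;> rfl

lemma freeFO_exFOBlock (k : ℕ) (φ : MSO R ar) :
    (exFOBlock k φ).freeFO = φ.freeFO \ Set.Iio k := by
  induction k generalizing φ with
  | zero => simp [exFOBlock]
  | succ k ih =>
    rw [exFOBlock, ih, freeFO, Set.sdiff_sdiff]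
    congr 1
    ext m
    simp only [Set.mem_union, Set.mem_singleton_iff, Set.mem_Iio]
    omega

lemma freeSO_eq_empty_of_isFO {φ : MSO R ar} (h : φ.IsFO) : φ.freeSO = ∅ := by
  induction φ with
  | eq | rel => rfl
  | mem | exSO => exact h.elim
  | not φ ih | exFO _ φ ih => exact ih h
  | and φ ψ ihφ ihψ => exact (congrArg₂ (· ∪ ·) (ihφ h.1) (ihψ h.2)).trans (Set.union_empty _)

lemma closed_exFOBlock {k : ℕ} {φ : MSO R ar} (hFO : φ.IsFO) (hfree : φ.freeFO ⊆ Set.Iio k) :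
    (exFOBlock k φ).Closed :=
  ⟨by rw [freeFO_exFOBlock, Set.sdiff_eq_empty.mpr hfree],
    freeSO_eq_empty_of_isFO (isFO_exFOBlock k hFO)⟩

section Semantics

variable (A : Struct.{u, v} R ar) (ν : ℕ → Option A.carrier) (μ : ℕ → Set A.carrier)

lemma sat_eq_iff {i j : ℕ} {x y : A.carrier} (hx : ν i = some x) (hy : ν j = some y) :
    Sat A (.eq i j) ν μ ↔ x = y := by
  simp [Sat, hx, hy, eq_comm]

lemma sat_top : Sat A top ν μ :=
  fun ⟨_, hx⟩ => hx ((sat_eq_iff A _ μ (Function.update_self ..) (Function.update_self ..)).2 rfl)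

lemma sat_conj (L : List (MSO R ar)) : Sat A (conj L) ν μ ↔ ∀ φ ∈ L, Sat A φ ν μ := by
  induction L with
  | nil => simpa [conj] using sat_top A ν μ
  | cons φ L ih => simp [conj, Sat, ← ih]

lemma sat_literal (p : Prop) [Decidable p] (φ : MSO R ar) :
    Sat A (literal p φ) ν μ ↔ (Sat A φ ν μ ↔ p) := by
  unfold literal
  split_ifs with hp <;> simp [Sat, hp]

lemma finAssign_of_lt {k : ℕ} (f : Fin k → A.carrier) {m : ℕ} (hm : m < k) :
    finAssign f ν m = some (f ⟨m, hm⟩) :=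
  dif_pos hm

lemma update_finAssign {k : ℕ} (f : Fin k → A.carrier) (x : A.carrier) :
    Function.update (finAssign f ν) k (some x) = finAssign (Fin.snoc f x) ν := by
  funext m
  rcases lt_trichotomy m k with hm | rfl | hm
  · rw [Function.update_of_ne hm.ne, finAssign_of_lt _ _ _ hm,
      finAssign_of_lt _ _ _ (hm.trans k.lt_succ_self)]
    simp [Fin.snoc, hm]
  · simp [finAssign, Fin.snoc]
  · simp [finAssign, Function.update_of_ne hm.ne', show ¬m < k by omega,
      show ¬m < k + 1 by omega]

lemma sat_exFOBlock (k : ℕ) (φ : MSO R ar) :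
    Sat A (exFOBlock k φ) ν μ ↔ ∃ f : Fin k → A.carrier, Sat A φ (finAssign f ν) μ := by
  induction k generalizing φ with
  | zero =>
    have hν (f : Fin 0 → A.carrier) : finAssign f ν = ν := funext fun m => dif_neg m.not_lt_zero
    simp [exFOBlock, hν]
  | succ k ih =>
    simp only [exFOBlock, ih, Sat, update_finAssign]
    exact ⟨fun ⟨f, x, h⟩ => ⟨_, h⟩, fun ⟨g, h⟩ => ⟨Fin.init g, g (Fin.last k), by
      rwa [Fin.snoc_init_self]⟩⟩

end Semantics

end MSO

open MSO

section CharacteristicSentence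

def edgeAtom (i j : ℕ) : MSO Unit graphAr := .rel () ![i, j]

lemma freeFO_edgeAtom (i j : ℕ) : (edgeAtom i j).freeFO = {i, j} :=
  Matrix.range_cons_cons_empty i j ![]

lemma sat_edgeAtom_iff {W : Type v} (H : SimpleGraph W) (ν : ℕ → Option W) (μ : ℕ → Set W)
    {i j : ℕ} {x y : W} (hx : ν i = some x) (hy : ν j = some y) :
    Sat (graphStruct H) (edgeAtom i j) ν μ ↔ H.Adj x y := by
  constructor
  · rintro ⟨g, hg, hadj⟩
    have h0 : x = g 0 := Option.some.inj (hx.symm.trans (hg 0))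
    have h1 : y = g 1 := Option.some.inj (hy.symm.trans (hg 1))
    rw [h0, h1]
    exact hadj
  · intro h
    exact ⟨![x, y], fun k => by fin_cases k <;> simpa, h⟩

variable {n : ℕ} (G : SimpleGraph (Fin n)) [DecidableRel G.Adj]

def pairType (i j : Fin n) : MSO Unit graphAr :=
  .and (literal (G.Adj i j) (edgeAtom i j)) (literal (i = j) (.eq i j))

def coverForm (n : ℕ) : MSO Unit graphAr :=
  .not (.exFO n (conj ((List.finRange n).map fun i : Fin n => .not (.eq n i))))

def isoForm : MSO Unit graphAr :=
  .and (conj ((List.finRange n).map fun i => conj ((List.finRange n).map (pairType G i))))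
    (coverForm n)

def characteristicSentence : MSO Unit graphAr := exFOBlock n (isoForm G)

lemma isFO_isoForm : (isoForm G).IsFO := by
  refine ⟨isFO_conj fun φ hφ => ?_, isFO_conj fun φ hφ => ?_⟩
  · obtain ⟨i, -, rfl⟩ := List.mem_map.mp hφ
    refine isFO_conj fun ψ hψ => ?_
    obtain ⟨j, -, rfl⟩ := List.mem_map.mp hψ
    exact ⟨isFO_literal _ trivial, isFO_literal _ trivial⟩
  · obtain ⟨i, -, rfl⟩ := List.mem_map.mp hφ
    exact trivial

lemma freeFO_pairType_subset (i j : Fin n) : (pairType G i j).freeFO ⊆ Set.Iio n := by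
  have hij : ({(i : ℕ), (j : ℕ)} : Set ℕ) ⊆ Set.Iio n := by simp [Set.insert_subset_iff]
  refine Set.union_subset ?_ ?_
  · rw [freeFO_literal, freeFO_edgeAtom]
    exact hij
  · rw [freeFO_literal]
    exact hij

lemma freeFO_coverForm_subset : (coverForm n).freeFO ⊆ Set.Iio n := by
  refine Set.sdiff_subset_iff.mpr (freeFO_conj_subset fun φ hφ => ?_)
  obtain ⟨i, -, rfl⟩ := List.mem_map.mp hφ
  simp [freeFO, Set.insert_subset_iff]

lemma freeFO_isoForm_subset : (isoForm G).freeFO ⊆ Set.Iio n := by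
  refine Set.union_subset (freeFO_conj_subset fun φ hφ => ?_) freeFO_coverForm_subset
  obtain ⟨i, -, rfl⟩ := List.mem_map.mp hφ
  refine freeFO_conj_subset fun ψ hψ => ?_
  obtain ⟨j, -, rfl⟩ := List.mem_map.mp hψ
  exact freeFO_pairType_subset G i j

lemma isFO_characteristicSentence : (characteristicSentence G).IsFO :=
  isFO_exFOBlock n (isFO_isoForm G)

lemma closed_characteristicSentence : (characteristicSentence G).Closed :=
  closed_exFOBlock (isFO_isoForm G) (freeFO_isoForm_subset G)

section Semantics

variable {W : Type v} (H : SimpleGraph W) (f : Fin n → W) (ν : ℕ → Option W) (μ : ℕ → Set W)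

lemma sat_pairType_iff (i j : Fin n) :
    Sat (graphStruct H) (pairType G i j) (finAssign f ν) μ ↔
      (H.Adj (f i) (f j) ↔ G.Adj i j) ∧ (f i = f j ↔ i = j) := by
  have hi := finAssign_of_lt (graphStruct H) ν f i.isLt
  have hj := finAssign_of_lt (graphStruct H) ν f j.isLt
  exact and_congr
    ((sat_literal (graphStruct H) _ μ (G.Adj i j) _).trans
      (iff_congr (sat_edgeAtom_iff H _ μ hi hj) Iff.rfl))
    ((sat_literal (graphStruct H) _ μ (i = j) (.eq i j)).trans
      (iff_congr (sat_eq_iff _ _ μ hi hj) Iff.rfl))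

lemma sat_coverForm_iff :
    Sat (graphStruct H) (coverForm n) (finAssign f ν) μ ↔ Function.Surjective f := by
  have hsat (y : W) (i : Fin n) : Sat (graphStruct H) (.not (.eq n i))
      (Function.update (finAssign f ν) n (some y)) μ ↔ y ≠ f i :=
    (sat_eq_iff _ _ μ (Function.update_self ..) ((Function.update_of_ne i.isLt.ne ..).trans
      (finAssign_of_lt (graphStruct H) ν f i.isLt))).not
  change (¬∃ y : W, Sat (graphStruct H) (conj _)
    (Function.update (finAssign f ν) n (some y)) μ) ↔ _
  simp only [sat_conj (graphStruct H) _ μ, List.mem_map, List.mem_finRange, true_and,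
    forall_exists_index, forall_apply_eq_imp_iff, hsat]
  simp [Function.Surjective, eq_comm]

lemma sat_isoForm_iff :
    Sat (graphStruct H) (isoForm G) (finAssign f ν) μ ↔
      (∀ i j, (H.Adj (f i) (f j) ↔ G.Adj i j) ∧ (f i = f j ↔ i = j)) ∧
        Function.Surjective f := by
  simp only [isoForm, Sat, sat_conj (graphStruct H) (finAssign f ν) μ, List.mem_map,
    List.mem_finRange, true_and, forall_exists_index, forall_apply_eq_imp_iff, sat_pairType_iff,
    sat_coverForm_iff]

end Semantics

lemma models_characteristicSentence_iff {W : Type w} (H : SimpleGraph W) :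
    (graphStruct H).Models (characteristicSentence G) ↔ Nonempty (G ≃g H) := by
  refine (sat_exFOBlock (graphStruct H) _ _ n _).trans ⟨fun ⟨f, hf⟩ => ?_, fun ⟨e⟩ => ⟨e, ?_⟩⟩
  · obtain ⟨hpair, hsurj⟩ := (sat_isoForm_iff G H f _ _).1 hf
    exact ⟨{ toEquiv := Equiv.ofBijective f ⟨fun i j h => (hpair i j).2.1 h, hsurj⟩
             map_rel_iff' := (hpair _ _).1 }⟩
  · exact (sat_isoForm_iff G H e _ _).2
      ⟨fun i j => ⟨e.map_adj_iff, e.injective.eq_iff⟩, e.surjective⟩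

end CharacteristicSentence

theorem exists_isFO_closed_models_iff_nonempty_iso {V : Type v} [Finite V]
    (G : SimpleGraph V) : ∃ φ : MSO Unit graphAr, φ.IsFO ∧ φ.Closed ∧
      ∀ {W : Type w} (H : SimpleGraph W), (graphStruct H).Models φ ↔ Nonempty (G ≃g H) := by
  classical
  obtain ⟨n, ⟨e⟩⟩ := Finite.exists_equiv_fin V
  let G' := G.map e.toEmbedding
  refine ⟨characteristicSentence G', isFO_characteristicSentence G',
    closed_characteristicSentence G', fun H => ?_⟩
  rw [models_characteristicSentence_iff]
  exact ⟨fun ⟨i⟩ => ⟨(SimpleGraph.Iso.map e G).trans i⟩,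
    fun ⟨i⟩ => ⟨(SimpleGraph.Iso.map e G).symm.trans i⟩⟩

theorem InTM.of_iso {r d : ℕ} {V W : Type v} {G : SimpleGraph V} {H : SimpleGraph W}
    (e : G ≃g H) (h : InTM r d H) : InTM r d G := by
  obtain ⟨T, t, rt, lab, S, emb, M⟩ := h
  refine ⟨T, t, rt, lab, S, emb ∘ e,
    { M with
      embInj := M.embInj.comp e.injective
      leavesEq := ?_
      leafLab := fun u => M.leafLab (e u)
      edge := fun u u' l hdist => e.map_adj_iff.symm.trans (M.edge (e u) (e u') l hdist) }⟩
  rw [Set.range_comp, e.surjective.range_eq, Set.image_univ, M.leavesEq]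

theorem mem_of_forall_isFO_models {C : ∀ {W : Type v}, SimpleGraph W → Prop}
    (hC : ∀ {V W : Type v} {G : SimpleGraph V} {H : SimpleGraph W}, G ≃g H → C H → C G)
    {V : Type v} [Finite V] {G : SimpleGraph V}
    (hG : ∀ φ : MSO Unit graphAr, φ.IsFO → φ.Closed →
      (∀ (W : Type v) (H : SimpleGraph W), Finite W → C H → (graphStruct H).Models φ) →
      (graphStruct G).Models φ) :
    C G := by
  obtain ⟨φ, hFO, hclosed, hφ⟩ := exists_isFO_closed_models_iff_nonempty_iso.{v, v} G
  by_contra hCG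
  have hnot : (graphStruct G).Models (.not φ) :=
    hG _ hFO hclosed fun W H _ hH hHφ => hCG (hC ((hφ H).1 hHφ).some hH)
  exact hnot ((hφ G).2 ⟨SimpleGraph.Iso.refl⟩)

/-- A finite graph is FO-pseudo-finite relative to `TM_fin(r,d)`
(equivalently, MSO-pseudo-finite relative to `TM_fin(r,d)`) iff it belongs to
`TM_fin(r,d)`. -/
theorem finite_pseudoFinite_iff_TMfin (r d : ℕ) (V : Type) [Finite V]
    (G : SimpleGraph V) :
    ((∀ φ : MSO Unit graphAr, φ.IsFO → φ.Closed →
        (∀ (W : Type) (H : SimpleGraph W), Finite W → InTM r d H →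
          (graphStruct H).Models φ) →
        (graphStruct G).Models φ) ↔ InTM r d G) ∧
    ((∀ φ : MSO Unit graphAr, φ.Closed →
        (∀ (W : Type) (H : SimpleGraph W), Finite W → InTM r d H →
          (graphStruct H).Models φ) →
        (graphStruct G).Models φ) ↔ InTM r d G) := by
  have of_pseudoFinite := mem_of_forall_isFO_models (C := @fun _ H => InTM r d H) (G := G)
    fun e h => h.of_iso e
  have models_of_mem (h : InTM r d G) (φ : MSO Unit graphAr)
      (hall : ∀ (W : Type) (H : SimpleGraph W), Finite W → InTM r d H →
        (graphStruct H).Models φ) : (graphStruct G).Models φ :=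
    hall V G ‹_› h
  exact ⟨⟨of_pseudoFinite, fun h φ _ _ => models_of_mem h φ⟩,
    ⟨fun hG => of_pseudoFinite fun φ _ hclosed => hG φ hclosed, fun h φ _ => models_of_mem h φ⟩⟩

end PF
end
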